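/- Let Λ be a non-ordinary numerical semigroup with conductor c = c(Λ) and ω = ω(Λ), and let σ be a right generator of Λ with σ > c + 1. Let Λ̃ = Λ ∖ {σ}. Then ω(Λ̃) = 1, shrink(Λ̃) = ω·shrink(Λ) + Λ_{{c,…,σ−1}}, and c(shrink(Λ̃)) ≤ c(shrink(Λ))·ω + (⌊(ω−2)/(σ−c−1)⌋ + 1)·c, where the floor is taken in ℤ. -/

import Mathlib

/-!
Removing `σ > c + 1` from `Λ` turns `c, c + 1, …, σ - 1` into left elements of `Λ̃ = Λ ∖ {σ}`.
Two of them are consecutive, so `ω(Λ̃) = 1`, and `shrink(Λ̃)` is generated by `L(Λ)` together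
with the interval `{c, …, σ - 1}`; since `L(Λ)` generates `ω · shrink(Λ)`, this gives the sum
decomposition. For the bound, `k = ⌊(ω - 2)/(σ - c - 1)⌋ + 1` is chosen so that sums of `k`
elements of the interval fill `[k c, k c + ω - 1]`, a complete residue system modulo `ω`.
Hence every `n ≥ c(shrink Λ) · ω + k c` is `ω m + (k c + r)` with `m ≥ c(shrink Λ)`.
-/

open Pointwise

namespace NumSgpPaper

/-- `S` is a numerical semigroup: an additive submonoid of ℕ with finite complement. -/
structure IsNumSgp (S : Set ℕ) : Prop where
  zero_mem : 0 ∈ S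
  add_mem : ∀ ⦃a b : ℕ⦄, a ∈ S → b ∈ S → a + b ∈ S
  cofinite : Sᶜ.Finite

/-- The Frobenius number: the largest gap of `S` (junk value `0` if there are no gaps). -/
noncomputable def frob (S : Set ℕ) : ℕ := sSup Sᶜ

open Classical in
/-- The conductor: one plus the largest gap, and `0` if there are no gaps (so `c(ℕ) = 0`). -/
noncomputable def conductor (S : Set ℕ) : ℕ := if Sᶜ = ∅ then 0 else frob S + 1

/-- The genus: the number of gaps. -/
noncomputable def genus (S : Set ℕ) : ℕ := Sᶜ.ncard

/-- The multiplicity: the smallest positive element. -/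
noncomputable def mult (S : Set ℕ) : ℕ := sInf {n : ℕ | n ∈ S ∧ 0 < n}

/-- The jump: the difference between the second and first positive elements. -/
noncomputable def jump (S : Set ℕ) : ℕ := sInf {n : ℕ | n ∈ S ∧ mult S < n} - mult S

/-- A minimal generator: a positive element of `S` that is not the sum of
two positive elements of `S`. -/
def IsMinGen (S : Set ℕ) (x : ℕ) : Prop :=
  0 < x ∧ x ∈ S ∧ ¬ ∃ a b : ℕ, 0 < a ∧ 0 < b ∧ a ∈ S ∧ b ∈ S ∧ a + b = x

/-- A right generator: a minimal generator larger than the Frobenius number. -/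
def IsRightGen (S : Set ℕ) (x : ℕ) : Prop := IsMinGen S x ∧ frob S < x

/-- A strong generator: a right generator `σ` such that `σ + m(S)` is a minimal
generator of `S \ {σ}`. -/
def IsStrongGen (S : Set ℕ) (σ : ℕ) : Prop :=
  IsRightGen S σ ∧ IsMinGen (S \ {σ}) (σ + mult S)

/-- `S` is ordinary when its gaps are exactly `{1, …, g(S)}`. -/
def IsOrdinary (S : Set ℕ) : Prop := Sᶜ = Set.Icc 1 (genus S)

/-- The left elements: the elements of `S` smaller than the Frobenius number. -/
def leftEls (S : Set ℕ) : Set ℕ := {x : ℕ | x ∈ S ∧ x < frob S}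

/-- The gcd of a set of natural numbers. -/
noncomputable def setGcd (A : Set ℕ) : ℕ :=
  sInf {d : ℕ | (∀ a ∈ A, d ∣ a) ∧ ∀ e : ℕ, (∀ a ∈ A, e ∣ a) → e ∣ d}

/-- `ω(S)`: the gcd of the left elements of `S`. -/
noncomputable def omega' (S : Set ℕ) : ℕ := setGcd (leftEls S)

/-- The shrinking of `S`: the additive submonoid of ℕ generated by the left
elements divided by their gcd. -/
noncomputable def shrink (S : Set ℕ) : Set ℕ :=
  (AddSubmonoid.closure ((fun x => x / omega' S) '' leftEls S) : AddSubmonoid ℕ)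

/-- `T` is a descendant of `S`: a numerical semigroup contained in `S` all of whose
missing elements lie beyond the Frobenius number of `S`. -/
def IsDescendant (S T : Set ℕ) : Prop :=
  IsNumSgp T ∧ T ⊆ S ∧ ∀ x ∈ S \ T, frob S < x

/-- The pseudo-ordinary semigroup `P_{m,u} = {0, m} ∪ {n : n ≥ m + u}`. -/
def P (m u : ℕ) : Set ℕ := {0, m} ∪ {n : ℕ | m + u ≤ n}

/-- The submonoid of ℕ generated by the interval `{a, …, b}`. -/
def intervalSgp (a b : ℕ) : Set ℕ := (AddSubmonoid.closure (Set.Icc a b) : AddSubmonoid ℕ)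

theorem setGcd_eq_natSetGcd (A : Set ℕ) : setGcd A = Nat.setGcd A := by
  have hgcd : {d : ℕ | (∀ a ∈ A, d ∣ a) ∧ ∀ e : ℕ, (∀ a ∈ A, e ∣ a) → e ∣ d} =
      {Nat.setGcd A} := by
    ext d
    simp only [Set.mem_ofPred_eq, Set.mem_singleton_iff]
    constructor
    · rintro ⟨hd, hmax⟩
      exact Nat.dvd_antisymm (Nat.dvd_setGcd_iff.mpr hd)
        (hmax _ fun a ha => Nat.setGcd_dvd_of_mem ha)
    · rintro rfl
      exact ⟨fun _ => Nat.setGcd_dvd_of_mem, fun _ => Nat.dvd_setGcd_iff.mpr⟩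
  rw [setGcd, hgcd, csInf_singleton]

theorem omega'_eq (S : Set ℕ) : omega' S = Nat.setGcd (leftEls S) :=
  setGcd_eq_natSetGcd _

section Gaps

variable {S : Set ℕ}

theorem le_frob_of_notMem (hS : Sᶜ.Finite) {x : ℕ} (hx : x ∉ S) : x ≤ frob S :=
  le_csSup hS.bddAbove hx

theorem mem_of_frob_lt (hS : Sᶜ.Finite) {x : ℕ} (hx : frob S < x) : x ∈ S := by
  by_contra h
  exact absurd (le_frob_of_notMem hS h) (not_le.mpr hx)

theorem frob_notMem (hS : Sᶜ.Finite) (hne : Sᶜ.Nonempty) : frob S ∉ S :=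
  Nat.sSup_mem hne hS.bddAbove

theorem compl_nonempty_of_frob_pos (hF : 0 < frob S) : Sᶜ.Nonempty := by
  by_contra h
  simp [frob, Set.not_nonempty_iff_eq_empty.mp h] at hF

theorem conductor_eq_frob_add_one (hne : Sᶜ.Nonempty) : conductor S = frob S + 1 :=
  if_neg hne.ne_empty

theorem frob_lt_of_conductor_lt (hne : Sᶜ.Nonempty) {n : ℕ} (h : conductor S < n) : frob S < n := by
  rw [conductor_eq_frob_add_one hne] at h
  omega

theorem mem_of_conductor_le (hS : Sᶜ.Finite) {n : ℕ} (hn : conductor S ≤ n) : n ∈ S := by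
  rcases Sᶜ.eq_empty_or_nonempty with h | h
  · exact Set.compl_empty_iff.mp h ▸ Set.mem_univ n
  · rw [conductor_eq_frob_add_one h] at hn
    exact mem_of_frob_lt hS hn

theorem conductor_le_of_forall_mem {B : ℕ} (hB : ∀ n, B ≤ n → n ∈ S) : conductor S ≤ B := by
  rcases Sᶜ.eq_empty_or_nonempty with h | ⟨y, hy⟩
  · simp [conductor, h]
  · have hlt : ∀ z ∈ Sᶜ, z < B := fun z hz => lt_of_not_ge fun hle => hz (hB z hle)
    have hsup : frob S ≤ B - 1 :=
      csSup_le ⟨y, hy⟩ fun z hz => Nat.le_sub_one_of_lt (hlt z hz)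
    have hyB := hlt y hy
    rw [conductor_eq_frob_add_one ⟨y, hy⟩]
    omega

end Gaps

theorem isOrdinary_of_leftEls_subset_zero {Λ : Set ℕ} (h : IsNumSgp Λ)
    (hL : leftEls Λ ⊆ {0}) : IsOrdinary Λ := by
  have hcompl : Λᶜ = Set.Icc 1 (frob Λ) := by
    ext x
    constructor
    · intro hx
      exact ⟨Nat.one_le_iff_ne_zero.mpr (by rintro rfl; exact hx h.zero_mem),
        le_frob_of_notMem h.cofinite hx⟩
    · rintro ⟨h1, h2⟩ hx
      rcases h2.lt_or_eq with hlt | rfl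
      · exact absurd (Set.mem_singleton_iff.mp (hL ⟨hx, hlt⟩)) (by omega)
      · exact frob_notMem h.cofinite (compl_nonempty_of_frob_pos h1) hx
  rw [IsOrdinary, genus, hcompl, Set.ncard_Icc_nat, Nat.add_sub_cancel]

theorem exists_pos_mem_leftEls {Λ : Set ℕ} (h : IsNumSgp Λ) (hord : ¬ IsOrdinary Λ) :
    ∃ x ∈ leftEls Λ, 0 < x := by
  by_contra hL
  push Not at hL
  exact hord (isOrdinary_of_leftEls_subset_zero h fun x hx => Nat.le_zero.mp (hL x hx))

section Shrink

variable {S : Set ℕ}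

theorem omega'_dvd_of_mem_leftEls {x : ℕ} (hx : x ∈ leftEls S) : omega' S ∣ x :=
  omega'_eq S ▸ Nat.setGcd_dvd_of_mem hx

theorem omega'_pos {x : ℕ} (hx : x ∈ leftEls S) (hx0 : 0 < x) : 0 < omega' S := by
  rw [omega'_eq, Nat.pos_iff_ne_zero, Ne, Nat.setGcd_eq_zero_iff]
  exact fun hsub => hx0.ne' (hsub hx)

theorem image_mul_omega'_shrink (S : Set ℕ) :
    (fun x => omega' S * x) '' shrink S = AddSubmonoid.closure (leftEls S) := by
  have hcancel : ∀ x ∈ leftEls S, AddMonoidHom.mulLeft (omega' S) (x / omega' S) = x :=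
    fun x hx => Nat.mul_div_cancel' (omega'_dvd_of_mem_leftEls hx)
  change AddMonoidHom.mulLeft (omega' S) '' shrink S = _
  rw [shrink, ← AddSubmonoid.coe_map, AddMonoidHom.map_mclosure, Set.image_image,
    Set.image_congr hcancel, Set.image_id']

theorem shrink_eq_closure_of_omega'_eq_one (h : omega' S = 1) :
    shrink S = AddSubmonoid.closure (leftEls S) := by
  simpa [h] using image_mul_omega'_shrink S

theorem setGcd_div_omega'_leftEls {x : ℕ} (hx : x ∈ leftEls S) (hx0 : 0 < x) :
    Nat.setGcd ((· / omega' S) '' leftEls S) = 1 := by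
  set e := Nat.setGcd ((· / omega' S) '' leftEls S)
  have hω := omega'_pos hx hx0
  have hdvd : e * omega' S ∣ omega' S := by
    rw [omega'_eq, Nat.dvd_setGcd_iff, ← omega'_eq]
    intro y hy
    rw [← Nat.div_mul_cancel (omega'_dvd_of_mem_leftEls hy)]
    exact Nat.mul_dvd_mul_right (Nat.setGcd_dvd_of_mem (Set.mem_image_of_mem _ hy)) _
  exact Nat.dvd_one.mp ((Nat.mul_dvd_mul_iff_right hω).mp (by rwa [one_mul]))

theorem compl_shrink_finite {x : ℕ} (hx : x ∈ leftEls S) (hx0 : 0 < x) :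
    (shrink S)ᶜ.Finite := by
  obtain ⟨N, hN⟩ := Nat.exists_mem_closure_of_ge ((· / omega' S) '' leftEls S)
  refine (Set.finite_Iio N).subset fun m hm =>
    Set.mem_Iio.mpr (lt_of_not_ge fun hNm => hm ?_)
  exact hN m hNm (by rw [setGcd_div_omega'_leftEls hx hx0]; exact one_dvd m)

end Shrink

section DiffSingleton

variable {Λ : Set ℕ} {σ : ℕ}

theorem frob_diff_singleton (hΛ : Λᶜ.Finite) (hσ : frob Λ < σ) : frob (Λ \ {σ}) = σ := by
  have hcompl : (Λ \ {σ})ᶜ = insert σ Λᶜ := by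
    rw [Set.sdiff_eq, Set.compl_inter, compl_compl, Set.union_comm, Set.insert_eq]
  rw [frob, hcompl]
  exact IsGreatest.csSup_eq ⟨Set.mem_insert σ _, Set.forall_mem_insert.mpr
    ⟨le_rfl, fun x hx => (le_frob_of_notMem hΛ hx).trans hσ.le⟩⟩

theorem leftEls_diff_singleton (hΛ : Λᶜ.Finite) (hne : Λᶜ.Nonempty) (hσ : frob Λ < σ) :
    leftEls (Λ \ {σ}) = leftEls Λ ∪ Set.Ico (conductor Λ) σ := by
  have hF := frob_notMem hΛ hne
  ext x
  simp only [leftEls, frob_diff_singleton hΛ hσ, conductor_eq_frob_add_one hne,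
    Set.mem_ofPred_eq, Set.mem_sdiff, Set.mem_singleton_iff, Set.mem_union, Set.mem_Ico]
  constructor
  · rintro ⟨⟨hx, -⟩, hxσ⟩
    rcases lt_trichotomy x (frob Λ) with hlt | rfl | hgt
    exacts [.inl ⟨hx, hlt⟩, (hF hx).elim, .inr ⟨hgt, hxσ⟩]
  · rintro (⟨hx, hxF⟩ | ⟨hFx, hxσ⟩)
    · exact ⟨⟨hx, by omega⟩, by omega⟩
    · exact ⟨⟨mem_of_frob_lt hΛ hFx, by omega⟩, hxσ⟩

theorem omega'_diff_singleton (hΛ : Λᶜ.Finite) (hne : Λᶜ.Nonempty)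
    (hgt : conductor Λ + 1 < σ) : omega' (Λ \ {σ}) = 1 := by
  have hσ := frob_lt_of_conductor_lt hne (Nat.lt_of_succ_lt hgt)
  have hleft : ∀ x, conductor Λ ≤ x → x < σ → x ∈ leftEls (Λ \ {σ}) := fun x h1 h2 => by
    rw [leftEls_diff_singleton hΛ hne hσ]
    exact .inr ⟨h1, h2⟩
  have hc := omega'_dvd_of_mem_leftEls (hleft _ le_rfl (by omega))
  have hc1 := omega'_dvd_of_mem_leftEls (hleft (conductor Λ + 1) (by omega) hgt)
  exact Nat.dvd_one.mp ((Nat.dvd_add_right hc).mp hc1)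

theorem shrink_diff_singleton (hΛ : Λᶜ.Finite) (hne : Λᶜ.Nonempty)
    (hgt : conductor Λ + 1 < σ) :
    shrink (Λ \ {σ}) =
      (fun x => omega' Λ * x) '' shrink Λ + intervalSgp (conductor Λ) (σ - 1) := by
  have hσ := frob_lt_of_conductor_lt hne (Nat.lt_of_succ_lt hgt)
  have hIcc : Set.Icc (conductor Λ) (σ - 1) = Set.Ico (conductor Λ) σ := by
    ext x; simp only [Set.mem_Icc, Set.mem_Ico]; omega
  rw [shrink_eq_closure_of_omega'_eq_one (omega'_diff_singleton hΛ hne hgt),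
    leftEls_diff_singleton hΛ hne hσ, image_mul_omega'_shrink, intervalSgp, hIcc,
    AddSubmonoid.closure_union, AddSubmonoid.coe_sup]

end DiffSingleton

theorem mem_intervalSgp_of_mul_le {a b x : ℕ} (k : ℕ) (h1 : k * a ≤ x) (h2 : x ≤ k * b) :
    x ∈ intervalSgp a b := by
  induction k generalizing x with
  | zero => simp_all [intervalSgp, zero_mem]
  | succ k ih =>
    have hab : a ≤ b := Nat.le_of_mul_le_mul_left (h1.trans h2) k.succ_pos
    rw [Nat.succ_mul] at h1 h2
    have hkab : k * a ≤ k * b := Nat.mul_le_mul_left k hab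
    obtain ⟨y, t, rfl, hat, htb, hy1, hy2⟩ :
        ∃ y t, x = y + t ∧ a ≤ t ∧ t ≤ b ∧ k * a ≤ y ∧ y ≤ k * b := by
      generalize k * a = p at h1 h2 hkab ⊢
      generalize k * b = q at h1 h2 hkab ⊢
      exact ⟨x - min b (x - p), min b (x - p),
        by omega, by omega, by omega, by omega, by omega⟩
    exact add_mem (ih hy1 hy2) (AddSubmonoid.subset_closure (Set.mem_Icc.mpr ⟨hat, htb⟩))

theorem mem_image_mul_add_intervalSgp {T : Set ℕ} {d s a b k n : ℕ} (hd : 0 < d)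
    (hT : ∀ m, s ≤ m → m ∈ T) (hk : k * a + (d - 1) ≤ k * b) (hn : s * d + k * a ≤ n) :
    n ∈ (fun x => d * x) '' T + intervalSgp a b := by
  obtain ⟨q, rfl⟩ := Nat.exists_eq_add_of_le ((Nat.le_add_left _ _).trans hn)
  have hdiv := Nat.div_add_mod q d
  have hmod := Nat.mod_lt q hd
  have hs : s ≤ q / d := (Nat.le_div_iff_mul_le hd).mpr (by omega)
  exact Set.mem_add.mpr ⟨d * (q / d), ⟨_, hT _ hs, rfl⟩, k * a + q % d,
    mem_intervalSgp_of_mul_le k (by omega) (by omega), by omega⟩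

theorem exists_natCast_eq_ediv_add_one {d c σ : ℕ} (hd : 0 < d) (hσ : c + 1 < σ) :
    ∃ k : ℕ, (k : ℤ) = ((d : ℤ) - 2) / ((σ : ℤ) - c - 1) + 1 ∧
      k * c + (d - 1) ≤ k * (σ - 1) := by
  have hpos : (0 : ℤ) < (σ : ℤ) - c - 1 := by omega
  have hfloor : -1 ≤ ((d : ℤ) - 2) / ((σ : ℤ) - c - 1) :=
    Int.le_ediv_of_mul_le hpos (by omega)
  obtain ⟨k, hk⟩ := Int.eq_ofNat_of_zero_le (by omega : 0 ≤ ((d : ℤ) - 2) / ((σ : ℤ) - c - 1) + 1)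
  refine ⟨k, hk.symm, ?_⟩
  have hlt := Int.lt_ediv_add_one_mul_self ((d : ℤ) - 2) hpos
  rw [hk] at hlt
  zify [hd, (by omega : 1 ≤ σ)]
  nlinarith

theorem stmt12_general (Λ : Set ℕ) (h : IsNumSgp Λ) (hord : ¬ IsOrdinary Λ)
    (σ : ℕ) (hgt : conductor Λ + 1 < σ) :
    omega' (Λ \ {σ}) = 1 ∧
    shrink (Λ \ {σ}) =
      (fun x => omega' Λ * x) '' shrink Λ + intervalSgp (conductor Λ) (σ - 1) ∧
    (conductor (shrink (Λ \ {σ})) : ℤ) ≤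
      (conductor (shrink Λ) : ℤ) * (omega' Λ : ℤ)
        + (((omega' Λ : ℤ) - 2) / ((σ : ℤ) - (conductor Λ : ℤ) - 1) + 1)
          * (conductor Λ : ℤ) := by
  obtain ⟨x, hx, hx0⟩ := exists_pos_mem_leftEls h hord
  have hne : Λᶜ.Nonempty := compl_nonempty_of_frob_pos (hx0.trans hx.2)
  have hω := omega'_pos hx hx0
  have hshrink := shrink_diff_singleton h.cofinite hne hgt
  obtain ⟨k, hk, hkσ⟩ := exists_natCast_eq_ediv_add_one hω hgt
  have hcond :
      conductor (shrink (Λ \ {σ})) ≤ conductor (shrink Λ) * omega' Λ + k * conductor Λ :=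
    conductor_le_of_forall_mem fun n hn => hshrink ▸ mem_image_mul_add_intervalSgp hω
      (fun m => mem_of_conductor_le (compl_shrink_finite hx hx0)) hkσ hn
  refine ⟨omega'_diff_singleton h.cofinite hne hgt, hshrink, ?_⟩
  rw [← hk]
  exact_mod_cast hcond

/-- If `σ > c + 1` is a right generator of the non-ordinary semigroup `Λ`, and
`Λ̃ = Λ \ {σ}`, then `ω(Λ̃) = 1`, `shrink(Λ̃) = ω·shrink(Λ) + Λ_{{c,…,σ-1}}`, and
`c(shrink(Λ̃)) ≤ c(shrink(Λ))·ω + (⌊(ω-2)/(σ-c-1)⌋ + 1)·c` (floor in ℤ). -/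
theorem stmt12 (Λ : Set ℕ) (h : IsNumSgp Λ) (hord : ¬ IsOrdinary Λ)
    (σ : ℕ) (hσ : IsRightGen Λ σ) (hgt : conductor Λ + 1 < σ) :
    omega' (Λ \ {σ}) = 1 ∧
    shrink (Λ \ {σ}) =
      (fun x => omega' Λ * x) '' shrink Λ + intervalSgp (conductor Λ) (σ - 1) ∧
    (conductor (shrink (Λ \ {σ})) : ℤ) ≤
      (conductor (shrink Λ) : ℤ) * (omega' Λ : ℤ)
        + (((omega' Λ : ℤ) - 2) / ((σ : ℤ) - (conductor Λ : ℤ) - 1) + 1)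
          * (conductor Λ : ℤ) :=
  stmt12_general Λ h hord σ hgt

end NumSgpPaper
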